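/- Let Γ⁺ = {z ∈ ℂ : Im z ≥ 0, (Im z)² ≤ 1 + 2 Re z, (Im z)² ≤ 1 − 2 Re z} be the church window region. If γ is a closed curve (a continuous map γ : [0,1] → ℂ with γ(0) = γ(1)) that is T-brimful for Γ⁺ — that is, there exists v ∈ ℂ with {γ(t) + v : t ∈ [0,1]} ⊆ Γ⁺, but for every real λ with 0 < λ < 1 there is no w ∈ ℂ with {γ(t) + w : t ∈ [0,1]} ⊆ λ·Γ⁺ (the dilate of Γ⁺ by factor λ about the origin) — then the arc length (total variation of γ on [0,1]) of γ is at least 2. -/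

import Mathlib

open Set

/-- The church window region Γ⁺, bounded below by the x-axis and by the parabolas
y² = 1 + 2x and y² = 1 − 2x. -/
def churchWindow : Set ℂ :=
  {z : ℂ | 0 ≤ z.im ∧ z.im ^ 2 ≤ 1 + 2 * z.re ∧ z.im ^ 2 ≤ 1 - 2 * z.re}

/-!
Suppose a closed curve has length `L ≤ 2λ` with `λ < 1`, and let its lowest point `z₀` lie on
the real axis. For two points `z, w` of the curve, the triangle `z z₀ w` has perimeter at most
`L`, so `|z - w| + |z - w̄| ≤ 2λ`, because `|z₀ - w̄| = |z₀ - w|`. This forces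
`(Im z)² + (Im w)² ≤ 2λ² - 2λ |Re z - Re w|`, which says exactly that the inequalities
`y² ≤ λ² + 2λ(x + u)` and `y² ≤ λ² - 2λ(x + u)` can be satisfied along the whole curve by a
single horizontal shift `u`: the shifted curve lies in `λ·Γ⁺`, so it is not brimful.
-/

section ClosedCurve

variable {α E : Type*} [LinearOrder α] [PseudoEMetricSpace E] {f : α → E} {p q a b c : α}

theorem eVariationOn_Icc_add_Icc (f : α → E) (hab : a ≤ b) (hbc : b ≤ c) :
    eVariationOn f (Icc a b) + eVariationOn f (Icc b c) = eVariationOn f (Icc a c) := by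
  simpa only [univ_inter] using eVariationOn.Icc_add_Icc f hab hbc (mem_univ b)

theorem edist_add_edist_add_edist_le_eVariationOn_of_le (hpq : f p = f q) (hpa : p ≤ a)
    (hab : a ≤ b) (hbc : b ≤ c) (hcq : c ≤ q) :
    edist (f a) (f b) + edist (f b) (f c) + edist (f c) (f a) ≤ eVariationOn f (Icc p q) := by
  have hca : edist (f c) (f a) ≤ edist (f c) (f q) + edist (f p) (f a) :=
    hpq ▸ edist_triangle _ _ _
  have edist_le {x y : α} (hxy : x ≤ y) : edist (f x) (f y) ≤ eVariationOn f (Icc x y) :=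
    eVariationOn.edist_le f (left_mem_Icc.2 hxy) (right_mem_Icc.2 hxy)
  calc edist (f a) (f b) + edist (f b) (f c) + edist (f c) (f a)
      ≤ eVariationOn f (Icc a b) + eVariationOn f (Icc b c)
          + (eVariationOn f (Icc c q) + eVariationOn f (Icc p a)) := by
        gcongr
        · exact edist_le hab
        · exact edist_le hbc
        · exact hca.trans (add_le_add (edist_le hcq) (edist_le hpa))
    _ = eVariationOn f (Icc p q) := by
        rw [← eVariationOn_Icc_add_Icc f hpa ((hab.trans hbc).trans hcq),
          ← eVariationOn_Icc_add_Icc f (hab.trans hbc) hcq, ← eVariationOn_Icc_add_Icc f hab hbc]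
        ring

theorem edist_add_edist_add_edist_le_eVariationOn (hpq : f p = f q) (ha : a ∈ Icc p q)
    (hb : b ∈ Icc p q) (hc : c ∈ Icc p q) :
    edist (f a) (f b) + edist (f b) (f c) + edist (f c) (f a) ≤ eVariationOn f (Icc p q) := by
  wlog hmin : a ≤ b ∧ a ≤ c generalizing a b c
  · rcases le_total b c with hbc | hcb
    · calc _ = edist (f b) (f c) + edist (f c) (f a) + edist (f a) (f b) := by ring
        _ ≤ _ := this hb hc ha ⟨hbc, by grind⟩
    · calc _ = edist (f c) (f a) + edist (f a) (f b) + edist (f b) (f c) := by ring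
        _ ≤ _ := this hc ha hb ⟨by grind, hcb⟩
  rcases le_total b c with hbc | hcb
  · exact edist_add_edist_add_edist_le_eVariationOn_of_le hpq ha.1 hmin.1 hbc hc.2
  · calc _ = edist (f a) (f c) + edist (f c) (f b) + edist (f b) (f a) := by
          simp only [edist_comm (f a), edist_comm (f b) (f c)]; ring
      _ ≤ _ := edist_add_edist_add_edist_le_eVariationOn_of_le hpq ha.1 hmin.2 hcb hb.2

theorem dist_add_dist_add_dist_le_toReal_eVariationOn {E : Type*} [PseudoMetricSpace E]
    {f : α → E} (hpq : f p = f q) (hfin : eVariationOn f (Icc p q) ≠ ⊤) (ha : a ∈ Icc p q)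
    (hb : b ∈ Icc p q) (hc : c ∈ Icc p q) :
    dist (f a) (f b) + dist (f b) (f c) + dist (f c) (f a) ≤ (eVariationOn f (Icc p q)).toReal := by
  rw [← ENNReal.ofReal_le_iff_le_toReal hfin, ENNReal.ofReal_add (by positivity) dist_nonneg,
    ENNReal.ofReal_add dist_nonneg dist_nonneg, ← edist_dist, ← edist_dist, ← edist_dist]
  exact edist_add_edist_add_edist_le_eVariationOn hpq ha hb hc

end ClosedCurve

section ChurchWindow

open Complex ComplexConjugate

theorem mem_mul_churchWindow_iff {l : ℝ} (hl : 0 < l) {z : ℂ} :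
    z ∈ (fun w => (l : ℂ) * w) '' churchWindow ↔
      0 ≤ z.im ∧ z.im ^ 2 ≤ l ^ 2 + 2 * l * z.re ∧ z.im ^ 2 ≤ l ^ 2 - 2 * l * z.re := by
  have scale (w : ℂ) : (0 ≤ ((l : ℂ) * w).im ∧
      ((l : ℂ) * w).im ^ 2 ≤ l ^ 2 + 2 * l * ((l : ℂ) * w).re ∧
      ((l : ℂ) * w).im ^ 2 ≤ l ^ 2 - 2 * l * ((l : ℂ) * w).re) ↔ w ∈ churchWindow := by
    have hl2 : 0 < l ^ 2 := by positivity
    simp only [churchWindow, mem_ofPred_eq, re_ofReal_mul, im_ofReal_mul]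
    refine and_congr (mul_nonneg_iff_of_pos_left hl) (and_congr ?_ ?_)
    · rw [show (l * w.im) ^ 2 = l ^ 2 * w.im ^ 2 by ring,
        show l ^ 2 + 2 * l * (l * w.re) = l ^ 2 * (1 + 2 * w.re) by ring, mul_le_mul_iff_right₀ hl2]
    · rw [show (l * w.im) ^ 2 = l ^ 2 * w.im ^ 2 by ring,
        show l ^ 2 - 2 * l * (l * w.re) = l ^ 2 * (1 - 2 * w.re) by ring, mul_le_mul_iff_right₀ hl2]
  have hl' : (l : ℂ) ≠ 0 := ofReal_ne_zero.2 hl.ne'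
  constructor
  · rintro ⟨w, hw, rfl⟩
    exact (scale w).2 hw
  · intro hz
    refine ⟨z / l, (scale _).1 ?_, mul_div_cancel₀ z hl'⟩
    rwa [mul_div_cancel₀ z hl']

theorem sq_im_add_sq_im_add_abs_re_sub_le {z w : ℂ} {l : ℝ}
    (h : dist z w + dist z (conj w) ≤ 2 * l) :
    z.im ^ 2 + w.im ^ 2 + 2 * l * |z.re - w.re| ≤ 2 * l ^ 2 := by
  have hA : dist z (conj w) ^ 2 = (z.re - w.re) ^ 2 + (z.im + w.im) ^ 2 := by
    rw [dist_eq_norm, Complex.sq_norm, normSq_apply]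
    simp only [sub_re, sub_im, conj_re, conj_im]
    ring
  have hB : dist z w ^ 2 = (z.re - w.re) ^ 2 + (z.im - w.im) ^ 2 := by
    rw [dist_eq_norm, Complex.sq_norm, normSq_apply]; simp only [sub_re, sub_im]; ring
  have hXA : |z.re - w.re| ≤ dist z (conj w) := by
    simpa [dist_eq_norm] using abs_re_le_norm (z - conj w)
  have hXB : |z.re - w.re| ≤ dist z w := by simpa [dist_eq_norm] using abs_re_le_norm (z - w)
  set A := dist z (conj w)
  set B := dist z w
  have h₁ : 0 ≤ (A - |z.re - w.re|) * (B - |z.re - w.re|) :=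
    mul_nonneg (by linarith) (by linarith)
  have h₂ : 0 ≤ (2 * l - (A + B)) * (2 * l + A + B - 2 * |z.re - w.re|) :=
    mul_nonneg (by linarith) (by linarith [dist_nonneg (x := z) (y := w)])
  nlinarith [sq_abs (z.re - w.re)]

/-- Reflect `w` in the horizontal line through `z₀`: the mirror image is as far from `z₀` as `w`. -/
theorem sq_im_sub_add_sq_im_sub_add_abs_re_sub_le {z₀ z w : ℂ} {l : ℝ}
    (h : dist z z₀ + dist z₀ w + dist w z ≤ 2 * l) :
    (z.im - z₀.im) ^ 2 + (w.im - z₀.im) ^ 2 + 2 * l * |z.re - w.re| ≤ 2 * l ^ 2 := by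
  set c : ℂ := z₀.im * I
  have hc : conj (z₀ - c) = z₀ - c := conj_eq_iff_im.2 (by simp [c])
  have hmirror : dist (z₀ - c) (conj (w - c)) = dist z₀ w := by
    rw [← dist_conj_conj, hc, conj_conj, dist_sub_right]
  have hreflect : dist (z - c) (conj (w - c)) ≤ dist z z₀ + dist z₀ w := by
    calc dist (z - c) (conj (w - c)) ≤ dist (z - c) (z₀ - c) + dist (z₀ - c) (conj (w - c)) :=
          dist_triangle _ _ _
      _ = dist z z₀ + dist z₀ w := by rw [hmirror, dist_sub_right]
  have key := sq_im_add_sq_im_add_abs_re_sub_le (z := z - c) (w := w - c) (l := l)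
    (by rw [dist_sub_right, dist_comm]; linarith)
  simpa [c] using key

theorem exists_add_mem_mul_churchWindow {K : Set ℂ} (hK : IsCompact K) (hne : K.Nonempty)
    {l : ℝ} (hl : 0 < l)
    (hper : ∀ a ∈ K, ∀ b ∈ K, ∀ c ∈ K, dist a b + dist b c + dist c a ≤ 2 * l) :
    ∃ w : ℂ, ∀ z ∈ K, z + w ∈ (fun z => (l : ℂ) * z) '' churchWindow := by
  obtain ⟨z₀, hz₀, hmin⟩ := hK.exists_isMinOn hne continuous_im.continuousOn
  set m := z₀.im
  set g : ℂ → ℝ := fun z => (z.im - m) ^ 2 - l ^ 2 - 2 * l * z.re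
  obtain ⟨z₁, hz₁, hmax⟩ := hK.exists_isMaxOn hne (by fun_prop : Continuous g).continuousOn
  -- `u` makes the first parabola inequality tight at `z₁`; the second then follows from the
  -- bound on the pair `z₁, z`.
  set u := g z₁ / (2 * l)
  have hu : 2 * l * u = g z₁ := mul_div_cancel₀ _ (by positivity)
  refine ⟨u - m * I, fun z hz => (mem_mul_churchWindow_iff hl).2 ?_⟩
  have hre : (z + (u - m * I)).re = z.re + u := by simp
  have him : (z + (u - m * I)).im = z.im - m := by simp [sub_eq_add_neg]
  have hpair := sq_im_sub_add_sq_im_sub_add_abs_re_sub_le (hper z₁ hz₁ z₀ hz₀ z hz)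
  have hgz : g z ≤ g z₁ := hmax hz
  rw [hre, him]
  refine ⟨sub_nonneg.2 (hmin hz), ?_, ?_⟩
  · simp only [g] at hgz; nlinarith
  · simp only [g] at hu; nlinarith [neg_abs_le (z₁.re - z.re)]

end ChurchWindow

theorem brimful_curve_length_ge_two_general (γ : ℝ → ℂ)
    (hcont : ContinuousOn γ (Set.Icc 0 1)) (hclosed : γ 0 = γ 1)
    (hbrim : ∀ l : ℝ, 0 < l → l < 1 →
      ¬ ∃ w : ℂ, (fun t => γ t + w) '' Set.Icc 0 1 ⊆
        (fun z => (l : ℂ) * z) '' churchWindow) :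
    2 ≤ eVariationOn γ (Set.Icc 0 1) := by
  by_contra! hlt
  have hfin : eVariationOn γ (Icc 0 1) ≠ ⊤ := hlt.ne_top
  set L := (eVariationOn γ (Icc 0 1)).toReal
  have hL : L < 2 := by
    simpa using (ENNReal.toReal_lt_toReal hfin ENNReal.ofNat_ne_top).2 hlt
  set l := max (L / 2) (1 / 2)
  have hl : 0 < l := lt_max_of_lt_right one_half_pos
  have hl1 : l < 1 := max_lt (by linarith) one_half_lt_one
  obtain ⟨w, hw⟩ := exists_add_mem_mul_churchWindow (isCompact_Icc.image_of_continuousOn hcont)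
    ((nonempty_Icc.2 zero_le_one).image γ) hl (by
      rintro _ ⟨a, ha, rfl⟩ _ ⟨b, hb, rfl⟩ _ ⟨c, hc, rfl⟩
      have := dist_add_dist_add_dist_le_toReal_eVariationOn hclosed hfin ha hb hc
      linarith [le_max_left (L / 2) (1 / 2)])
  exact hbrim l hl hl1 ⟨w, by rintro _ ⟨t, ht, rfl⟩; exact hw _ (mem_image_of_mem γ ht)⟩

/-- Any closed curve that is T-brimful for the church window has length at least 2. -/
theorem brimful_curve_length_ge_two (γ : ℝ → ℂ)
    (hcont : ContinuousOn γ (Set.Icc 0 1)) (hclosed : γ 0 = γ 1)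
    (hin : ∃ v : ℂ, (fun t => γ t + v) '' Set.Icc 0 1 ⊆ churchWindow)
    (hbrim : ∀ l : ℝ, 0 < l → l < 1 →
      ¬ ∃ w : ℂ, (fun t => γ t + w) '' Set.Icc 0 1 ⊆
        (fun z => (l : ℂ) * z) '' churchWindow) :
    2 ≤ eVariationOn γ (Set.Icc 0 1) :=
  brimful_curve_length_ge_two_general γ hcont hclosed hbrim
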